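/- arXiv:math/9909041 — 2 statements merged into one kernel-verified Lean document; each statement's English description precedes it below -/
import Mathlib

section
/- A contractive unital homomorphism from a unital C*-algebra into a unital C*-algebra is a *-homomorphism. -/
/-- A contractive unital homomorphism sends selfadjoint elements to selfadjoint elements. -/
lemma contractive_hom_selfAdjoint {A B : Type*} [CStarAlgebra A] [CStarAlgebra B]
    (θ : A →ₐ[ℂ] B) (hθ : ∀ a : A, ‖θ a‖ ≤ ‖a‖) {s : A} (hs : IsSelfAdjoint s) :
    IsSelfAdjoint (θ s) := by
  rcases subsingleton_or_nontrivial B with hB | hB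
  · exact Subsingleton.elim _ _
  rcases subsingleton_or_nontrivial A with hA | hA
  · rw [Subsingleton.elim s 0, map_zero]
    exact IsSelfAdjoint.zero B
  set b := θ s with hb
  set w : B := b - star b with hw
  set y : B := Complex.I • w with hy
  have hysa : IsSelfAdjoint y := by
    rw [hy, hw, IsSelfAdjoint, star_smul, star_sub, star_star, RCLike.star_def, Complex.conj_I,
      neg_smul, ← smul_neg, neg_sub]
  -- key norm bound: ‖y - 2t‖² ≤ 4(‖s‖² + t²)
  have key : ∀ t : ℝ, ‖y - ((2 * t : ℝ) : ℂ) • (1 : B)‖ ^ 2 ≤ 4 * (‖s‖ ^ 2 + t ^ 2) := by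
    intro t
    set c : ℂ := (t : ℂ) * Complex.I with hc
    set u : A := s + algebraMap ℂ A c with hu
    have hcstar : star c = -c := by
      rw [hc, RCLike.star_def, map_mul, Complex.conj_I]
      simp
    have hustar : star u = s - algebraMap ℂ A c := by
      rw [hu, star_add, hs.star_eq, ← algebraMap_star_comm, hcstar, map_neg, sub_eq_add_neg]
    have hnormu : ‖u‖ ^ 2 ≤ ‖s‖ ^ 2 + t ^ 2 := by
      have hmul : star u * u = s * s + algebraMap ℂ A ((t ^ 2 : ℝ) : ℂ) := by
        have hcc : algebraMap ℂ A c * algebraMap ℂ A c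
            = - algebraMap ℂ A ((t ^ 2 : ℝ) : ℂ) := by
          rw [← map_mul, ← map_neg]
          congr 1
          rw [hc]
          push_cast
          rw [mul_mul_mul_comm, Complex.I_mul_I]
          ring
        have hcomm : algebraMap ℂ A c * s = s * algebraMap ℂ A c := Algebra.commutes c s
        rw [hustar, hu, sub_mul, mul_add, mul_add, hcc, hcomm]
        abel
      calc ‖u‖ ^ 2 = ‖star u * u‖ := by rw [CStarRing.norm_star_mul_self, sq]
        _ ≤ ‖s * s‖ + ‖algebraMap ℂ A ((t ^ 2 : ℝ) : ℂ)‖ := hmul ▸ norm_add_le _ _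
        _ ≤ ‖s‖ ^ 2 + t ^ 2 := by
            have h1 : ‖s * s‖ ≤ ‖s‖ ^ 2 := by rw [sq]; exact norm_mul_le s s
            have h2 : ‖algebraMap ℂ A ((t ^ 2 : ℝ) : ℂ)‖ = t ^ 2 := by
              rw [norm_algebraMap']
              simp [abs_of_nonneg (sq_nonneg t)]
            linarith
    have hθu : θ u = b + algebraMap ℂ B c := by rw [hu, map_add, AlgHom.commutes, hb]
    have hθu_sub : θ u - star (θ u) = w + (algebraMap ℂ B c + algebraMap ℂ B c) := by
      rw [hθu, star_add, ← algebraMap_star_comm, hcstar, map_neg, hw]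
      abel
    have hrel : y - ((2 * t : ℝ) : ℂ) • (1 : B) = Complex.I • (θ u - star (θ u)) := by
      rw [hθu_sub, smul_add, ← hy, Algebra.algebraMap_eq_smul_one, ← add_smul]
      have : Complex.I • ((c + c) • (1 : B)) = (-((2 * t : ℝ) : ℂ)) • (1 : B) := by
        rw [smul_smul]
        congr 1
        rw [hc]
        push_cast
        have : Complex.I * (↑t * Complex.I + ↑t * Complex.I)
            = (Complex.I * Complex.I) * (2 * t) := by ring
        rw [this, Complex.I_mul_I]
        ring
      rw [this, neg_smul]
      abel
    have hnormθu : ‖θ u - star (θ u)‖ ≤ 2 * ‖u‖ := by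
      calc ‖θ u - star (θ u)‖ ≤ ‖θ u‖ + ‖star (θ u)‖ := norm_sub_le _ _
        _ = 2 * ‖θ u‖ := by rw [norm_star]; ring
        _ ≤ 2 * ‖u‖ := by linarith [hθ u]
    have hIn : ‖y - ((2 * t : ℝ) : ℂ) • (1 : B)‖ = ‖θ u - star (θ u)‖ := by
      rw [hrel, norm_smul, Complex.norm_I, one_mul]
    rw [hIn]
    have h0 : (0:ℝ) ≤ ‖θ u - star (θ u)‖ := norm_nonneg _
    have h2u : (0:ℝ) ≤ ‖u‖ := norm_nonneg _
    nlinarith [hnormθu, hnormu]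
  -- obtain a spectral value attaining the norm
  obtain ⟨z, hz, hzr⟩ := spectrum.exists_nnnorm_eq_spectralRadius (a := y)
  have hzy : (‖z‖₊ : NNReal) = ‖y‖₊ := by
    have := hzr.trans hysa.spectralRadius_eq_nnnorm
    exact_mod_cast this
  have hz_norm : ‖z‖ = ‖y‖ := congrArg NNReal.toReal hzy
  have hz_re : z = z.re := hysa.mem_spectrum_eq_re hz
  set μ : ℝ := z.re with hμdef
  -- μ - 2t is in the spectrum of the shifted element
  have habs : ∀ t : ℝ, (μ - 2 * t) ^ 2 ≤ 4 * (‖s‖ ^ 2 + t ^ 2) := by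
    intro t
    have hmem : (-((2 * t : ℝ) : ℂ) + z) ∈ spectrum ℂ (y - ((2 * t : ℝ) : ℂ) • (1 : B)) := by
      have heq : algebraMap ℂ B (-((2 * t : ℝ) : ℂ)) + y
          = y - ((2 * t : ℝ) : ℂ) • (1 : B) := by
        rw [map_neg, Algebra.algebraMap_eq_smul_one]
        abel
      rw [← heq, ← spectrum.singleton_add_eq]
      exact Set.add_mem_add rfl hz
    have hle := spectrum.norm_le_norm_of_mem hmem
    have hznorm : ‖(-((2 * t : ℝ) : ℂ) + z)‖ = |μ - 2 * t| := by
      rw [hz_re]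
      have : (-((2 * t : ℝ) : ℂ) + (z.re : ℂ)) = ((μ - 2 * t : ℝ) : ℂ) := by
        rw [hμdef]; push_cast; ring
      rw [this, Complex.norm_real, Real.norm_eq_abs]
    rw [hznorm] at hle
    calc (μ - 2 * t) ^ 2 = |μ - 2 * t| ^ 2 := (sq_abs _).symm
      _ ≤ ‖y - ((2 * t : ℝ) : ℂ) • (1 : B)‖ ^ 2 := by
          have := norm_nonneg (y - ((2 * t : ℝ) : ℂ) • (1 : B))
          nlinarith [abs_nonneg (μ - 2 * t)]
      _ ≤ 4 * (‖s‖ ^ 2 + t ^ 2) := key t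
  -- conclude μ = 0
  have hμ0 : μ = 0 := by
    by_contra hμ
    have hμ2 : 0 < μ ^ 2 := by positivity
    have ht := habs (-(‖s‖ ^ 2 + 1) / μ)
    have hfs : μ * (-(‖s‖ ^ 2 + 1) / μ) = -(‖s‖ ^ 2 + 1) := by field_simp
    nlinarith [ht, hfs, hμ2, sq_nonneg (-(‖s‖ ^ 2 + 1) / μ)]
  -- hence y = 0, so w = 0
  have hy0 : y = 0 := by
    have : ‖y‖ = 0 := by
      rw [← hz_norm, hz_re, hμ0]
      simp
    exact norm_eq_zero.mp this
  have hw0 : w = 0 := by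
    have := hy0
    rw [hy, smul_eq_zero] at this
    rcases this with h | h
    · exact absurd h Complex.I_ne_zero
    · exact h
  have hw0' : b - star b = 0 := by rw [← hw]; exact hw0
  exact (sub_eq_zero.mp hw0').symm

/-- A contractive unital homomorphism between unital C*-algebras is a *-homomorphism:
it automatically preserves adjoints. -/
theorem contractive_hom_is_star_hom {A B : Type*} [CStarAlgebra A] [CStarAlgebra B]
    (θ : A →ₐ[ℂ] B) (hθ : ∀ a : A, ‖θ a‖ ≤ ‖a‖) :
    ∀ a : A, θ (star a) = star (θ a) := by
  intro a
  have h1 : IsSelfAdjoint (θ (realPart a : A)) :=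
    contractive_hom_selfAdjoint θ hθ (realPart a).property
  have h2 : IsSelfAdjoint (θ (imaginaryPart a : A)) :=
    contractive_hom_selfAdjoint θ hθ (imaginaryPart a).property
  have hdecomp : (realPart a : A) + Complex.I • (imaginaryPart a : A) = a :=
    realPart_add_I_smul_imaginaryPart a
  have hstar : star a = (realPart a : A) - Complex.I • (imaginaryPart a : A) := by
    conv_lhs => rw [← hdecomp]
    rw [star_add, star_smul, (realPart a).property.star_eq, (imaginaryPart a).property.star_eq,
      RCLike.star_def, Complex.conj_I, neg_smul, sub_eq_add_neg]
  calc θ (star a) = θ (realPart a : A) - Complex.I • θ (imaginaryPart a : A) := by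
        rw [hstar, map_sub, map_smul θ Complex.I ((imaginaryPart a : A))]
    _ = star (θ a) := by
        conv_rhs => rw [← hdecomp]
        rw [map_add, map_smul θ Complex.I ((imaginaryPart a : A)), star_add, star_smul,
          h1.star_eq, h2.star_eq, RCLike.star_def, Complex.conj_I, neg_smul, sub_eq_add_neg]
end

section
/- Let A be a unital C*-algebra, B a unital Banach algebra, and θ : A → B a contractive unital homomorphism that is injective. Then θ is an isometry onto its range, and the range is a C*-algebra with the norm and multiplication inherited from B. -/
open NormedSpace Filter Complex Topology Polynomial
open scoped NNReal ENNReal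

section Aux
variable {B : Type*} [NormedRing B] [NormedAlgebra ℂ B] [CompleteSpace B]

lemma pow_norm_bound (x : B) {δ : ℝ≥0} (h : spectralRadius ℂ x < δ) :
    ∃ C : ℝ, 1 ≤ C ∧ ∀ n : ℕ, ‖x ^ n‖ ≤ C * (δ : ℝ) ^ n := by
  have htends := spectrum.pow_nnnorm_pow_one_div_tendsto_nhds_spectralRadius x
  have hev : ∀ᶠ n : ℕ in atTop, (‖x ^ n‖₊ : ENNReal) ^ (1 / (n : ℝ)) < (δ : ENNReal) := by
    exact htends.eventually_lt_const h
  rw [eventually_atTop] at hev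
  obtain ⟨N, hN⟩ := hev
  have hpow : ∀ n : ℕ, N ≤ n → 1 ≤ n → ‖x ^ n‖ ≤ (δ : ℝ) ^ n := by
    intro n hn hn1
    have := hN n hn
    have hn0 : (n : ℝ) ≠ 0 := by positivity
    have h2 : ((‖x ^ n‖₊ : ENNReal) ^ (1 / (n : ℝ))) ^ (n : ℝ) ≤ (δ : ENNReal) ^ (n : ℝ) :=
      ENNReal.rpow_le_rpow this.le (by positivity)
    rw [← ENNReal.rpow_mul, one_div, inv_mul_cancel₀ hn0, ENNReal.rpow_one] at h2
    have h3 : (‖x ^ n‖₊ : ENNReal) ≤ ((δ ^ n : ℝ≥0) : ENNReal) := by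
      rw [ENNReal.coe_pow]
      calc (‖x ^ n‖₊ : ENNReal) ≤ (δ : ENNReal) ^ (n : ℝ) := h2
        _ = (δ : ENNReal) ^ n := ENNReal.rpow_natCast _ n
    have h4 : ‖x ^ n‖₊ ≤ δ ^ n := by exact_mod_cast h3
    calc ‖x ^ n‖ = (‖x ^ n‖₊ : ℝ) := rfl
      _ ≤ ((δ ^ n : ℝ≥0) : ℝ) := by exact_mod_cast h4
      _ = (δ : ℝ) ^ n := by push_cast; ring
  have hδ0 : (0:ℝ) < δ := by
    have : (0 : ENNReal) ≤ spectralRadius ℂ x := zero_le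
    have : (0 : ENNReal) < δ := lt_of_le_of_lt this h
    exact_mod_cast this
  set S : ℝ := ∑ k ∈ Finset.range (N+1), ‖x ^ k‖ / (δ:ℝ) ^ k with hS
  have hS0 : (0:ℝ) ≤ S := Finset.sum_nonneg fun k _ => by positivity
  set C : ℝ := 1 + S with hC
  have hCge : 1 ≤ C := by simp only [hC]; linarith
  refine ⟨C, hCge, fun n => ?_⟩
  rcases le_or_gt n N with hn | hn
  · have hmem : n ∈ Finset.range (N+1) := Finset.mem_range.2 (Nat.lt_succ_of_le hn)
    have hle : ‖x ^ n‖ / (δ:ℝ) ^ n ≤ C := by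
      have h5 := Finset.single_le_sum (f := fun k => ‖x ^ k‖ / (δ:ℝ) ^ k)
        (fun k _ => by positivity) hmem
      rw [← hS] at h5
      simp only [hC]
      linarith
    have hd : (0:ℝ) < (δ:ℝ) ^ n := by positivity
    calc ‖x ^ n‖ = (‖x ^ n‖ / (δ:ℝ)^n) * (δ:ℝ)^n := by field_simp
      _ ≤ C * (δ:ℝ)^n := by gcongr
  · have h1 : 1 ≤ n := le_trans (Nat.succ_le_succ (Nat.zero_le _)) hn
    calc ‖x ^ n‖ ≤ (δ:ℝ) ^ n := hpow n hn.le h1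
      _ ≤ C * (δ:ℝ)^n := by nlinarith [pow_pos hδ0 n]

lemma add_pow_norm_bound [NormOneClass B] {x e : B} (hcomm : Commute x e) {C δ : ℝ} (hC : 1 ≤ C)
    (hx : ∀ k, ‖x ^ k‖ ≤ C * δ ^ k) (he : ∀ k, ‖e ^ k‖ ≤ δ ^ k) (hδ : 0 ≤ δ) :
    ∀ n, ‖(x + e) ^ n‖ ≤ C * (2 * δ) ^ n := by
  intro n
  rw [hcomm.add_pow]
  calc ‖∑ m ∈ Finset.range (n + 1), x ^ m * e ^ (n - m) * (n.choose m : B)‖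
      ≤ ∑ m ∈ Finset.range (n + 1), ‖x ^ m * e ^ (n - m) * (n.choose m : B)‖ :=
        norm_sum_le _ _
    _ ≤ ∑ m ∈ Finset.range (n + 1), C * δ ^ n * (n.choose m : ℝ) := by
        refine Finset.sum_le_sum fun m hm => ?_
        have hm' : m ≤ n := Nat.lt_succ_iff.mp (Finset.mem_range.mp hm)
        have h1 : ‖x ^ m * e ^ (n - m) * (n.choose m : B)‖
            ≤ ‖x ^ m‖ * ‖e ^ (n - m)‖ * ‖(n.choose m : B)‖ :=
          le_trans (norm_mul_le _ _) (by gcongr; exact norm_mul_le _ _)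
        have h2 : ‖(n.choose m : B)‖ ≤ (n.choose m : ℝ) := by
          simpa using Nat.norm_cast_le (α := B) (n := n.choose m)
        calc ‖x ^ m * e ^ (n - m) * (n.choose m : B)‖
            ≤ ‖x ^ m‖ * ‖e ^ (n - m)‖ * ‖(n.choose m : B)‖ := h1
          _ ≤ (C * δ ^ m) * δ ^ (n - m) * (n.choose m : ℝ) := by
              have hxm := hx m
              have hem := he (n - m)
              have : (0:ℝ) ≤ ‖e ^ (n-m)‖ := norm_nonneg _
              gcongr ?_ * ?_ * ?_ <;> first | exact hxm | exact hem | exact h2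
          _ = C * δ ^ n * (n.choose m : ℝ) := by
              rw [mul_assoc C, ← pow_add, Nat.add_sub_cancel' hm']
    _ = C * δ ^ n * ∑ m ∈ Finset.range (n + 1), (n.choose m : ℝ) := by
        rw [← Finset.mul_sum]
    _ = C * δ ^ n * 2 ^ n := by
        norm_cast
        rw [Nat.sum_range_choose]
    _ = C * (2 * δ) ^ n := by ring

lemma norm_exp_smul_le {h : B} {C ε : ℝ} (hC : 0 ≤ C) (hb : ∀ n, ‖h ^ n‖ ≤ C * ε ^ n)
    (hε : 0 ≤ ε) (z : ℂ) : ‖exp (z • h)‖ ≤ C * Real.exp (ε * ‖z‖) := by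
  rw [exp_eq_tsum ℂ]
  have hsum : Summable fun n : ℕ => C * ((ε * ‖z‖) ^ n / n.factorial) :=
    (NormedSpace.expSeries_div_summable (ε * ‖z‖)).mul_left C
  have hle : ∀ n : ℕ, ‖((n.factorial : ℂ))⁻¹ • (z • h) ^ n‖
      ≤ C * ((ε * ‖z‖) ^ n / n.factorial) := by
    intro n
    rw [_root_.smul_pow, norm_smul, norm_smul]
    calc ‖((n.factorial : ℂ))⁻¹‖ * (‖z ^ n‖ * ‖h ^ n‖)
        ≤ (n.factorial : ℝ)⁻¹ * (‖z‖ ^ n * (C * ε ^ n)) := by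
          gcongr
          · simp
          · rw [norm_pow]
          · exact hb n
      _ = C * ((ε * ‖z‖) ^ n / n.factorial) := by ring
  calc ‖∑' n : ℕ, ((n.factorial : ℂ))⁻¹ • (z • h) ^ n‖
      ≤ ∑' n : ℕ, C * ((ε * ‖z‖) ^ n / n.factorial) := tsum_of_norm_bounded hsum.hasSum hle
    _ = C * ∑' n : ℕ, ((ε * ‖z‖) ^ n / n.factorial) := tsum_mul_left
    _ = C * Real.exp (ε * ‖z‖) := by
        rw [Real.exp_eq_exp_ℝ, exp_eq_tsum_div]

lemma half_plane_bound (h : B)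
    (hq : ∀ ε : ℝ, 0 < ε → ∃ C : ℝ, 1 ≤ C ∧ ∀ n, ‖h ^ n‖ ≤ C * ε ^ n)
    (hb : ∀ t : ℝ, ‖exp (((t : ℂ) * Complex.I) • h)‖ ≤ 1) :
    ∀ z : ℂ, 0 ≤ z.re → ‖exp (z • h)‖ ≤ 1 := by
  have hF : Differentiable ℂ (fun w : ℂ => exp (w • h)) :=
    fun w => (hasDerivAt_exp_smul_const h w).differentiableAt
  have key : ∀ δ : ℝ, 0 < δ → ∀ z : ℂ, 0 ≤ z.re →
      ‖exp (z • h)‖ ≤ Real.exp (δ * z.re) := by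
    intro δ hδ z hz
    set f : ℂ → B := fun w => Complex.exp (-(δ:ℂ) * w) • exp (w • h) with hf
    have hfnorm : ∀ w : ℂ, ‖f w‖ = Real.exp (-δ * w.re) * ‖exp (w • h)‖ := by
      intro w
      rw [hf]
      simp only [norm_smul, Complex.norm_exp]
      congr 2
      simp
    have hd : DiffContOnCl ℂ f {w : ℂ | 0 < w.re} :=
      ((differentiable_id.const_mul (-(δ:ℂ))).cexp.smul hF).diffContOnCl
    obtain ⟨C₁, hC₁, hC₁b⟩ := hq 1 one_pos
    have hexp : ∃ c < (2:ℝ), ∃ b : ℝ, f =O[Bornology.cobounded ℂ ⊓ Filter.principal {w : ℂ | 0 < w.re}]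
        fun w => Real.exp (b * ‖w‖ ^ c) := by
      refine ⟨1, one_lt_two, δ + 1, Asymptotics.IsBigO.of_bound C₁ ?_⟩
      refine Eventually.of_forall fun w => ?_
      have h1 : ‖exp (w • h)‖ ≤ C₁ * Real.exp (1 * ‖w‖) := norm_exp_smul_le (le_trans zero_le_one hC₁) hC₁b zero_le_one w
      have h2 : Real.exp (-δ * w.re) ≤ Real.exp (δ * ‖w‖) := by
        apply Real.exp_le_exp.2
        have := Complex.abs_re_le_norm w
        nlinarith [neg_abs_le w.re, abs_nonneg w.re]
      rw [hfnorm]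
      have hCnn : (0:ℝ) ≤ C₁ := le_trans zero_le_one hC₁
      calc Real.exp (-δ * w.re) * ‖exp (w • h)‖
          ≤ Real.exp (δ * ‖w‖) * (C₁ * Real.exp (1 * ‖w‖)) := by
            apply mul_le_mul h2 h1 (norm_nonneg _) (Real.exp_nonneg _)
        _ = C₁ * (Real.exp (δ * ‖w‖) * Real.exp (1 * ‖w‖)) := by ring
        _ = C₁ * Real.exp ((δ + 1) * ‖w‖ ^ (1:ℝ)) := by
            rw [← Real.exp_add, Real.rpow_one]
            congr 1
            ring
        _ ≤ C₁ * ‖Real.exp ((δ + 1) * ‖w‖ ^ (1:ℝ))‖ := by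
            rw [Real.norm_eq_abs, abs_of_pos (Real.exp_pos _)]
      
    have hre : IsBoundedUnder (· ≤ ·) atTop fun x : ℝ => ‖f x‖ := by
      obtain ⟨C₂, hC₂, hC₂b⟩ := hq (δ/2) (by positivity)
      refine ⟨C₂, ?_⟩
      rw [eventually_map]
      filter_upwards [eventually_ge_atTop (0:ℝ)] with x hx
      have h1 : ‖exp ((x:ℂ) • h)‖ ≤ C₂ * Real.exp (δ/2 * ‖(x:ℂ)‖) := norm_exp_smul_le (le_trans zero_le_one hC₂) hC₂b (by positivity) _
      rw [hfnorm]
      have hxn : ‖(x:ℂ)‖ = x := by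
        rw [Complex.norm_real, Real.norm_eq_abs, _root_.abs_of_nonneg hx]
      rw [hxn] at h1
      have hre' : ((x:ℂ)).re = x := by simp
      rw [hre']
      calc Real.exp (-δ * x) * ‖exp ((x:ℂ) • h)‖
          ≤ Real.exp (-δ * x) * (C₂ * Real.exp (δ/2 * x)) := by
            apply mul_le_mul_of_nonneg_left h1 (Real.exp_nonneg _)
        _ = C₂ * Real.exp (-(δ/2) * x) := by
            rw [mul_comm (Real.exp (-δ*x)), mul_assoc, ← Real.exp_add]; ring_nf
        _ ≤ C₂ * 1 := by
            apply mul_le_mul_of_nonneg_left _ (le_trans zero_le_one hC₂)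
            apply Real.exp_le_one_iff.2
            nlinarith
        _ = C₂ := mul_one _
    have him : ∀ x : ℝ, ‖f ((x:ℂ) * Complex.I)‖ ≤ 1 := by
      intro x
      rw [hfnorm]
      have : ((x:ℂ) * Complex.I).re = 0 := by simp
      rw [this, mul_zero, Real.exp_zero, one_mul]
      exact hb x
    have := PhragmenLindelof.right_half_plane_of_bounded_on_real hd hexp hre him hz
    rw [hfnorm] at this
    have hep : 0 < Real.exp (-δ * z.re) := Real.exp_pos _
    calc ‖exp (z • h)‖ = (Real.exp (-δ * z.re))⁻¹ * (Real.exp (-δ * z.re) * ‖exp (z • h)‖) := by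
          field_simp
      _ ≤ (Real.exp (-δ * z.re))⁻¹ * 1 := by
          apply mul_le_mul_of_nonneg_left this (by positivity)
      _ = Real.exp (δ * z.re) := by
          rw [mul_one, ← Real.exp_neg]; ring_nf
  intro z hz
  have hseq : ∀ n : ℕ, ‖exp (z • h)‖ ≤ Real.exp ((1/(n+1)) * z.re) := fun n =>
    key (1/(n+1)) (by positivity) z hz
  have htend : Tendsto (fun n : ℕ => Real.exp ((1/(n+1)) * z.re)) atTop (𝓝 1) := by
    rw [show (1:ℝ) = Real.exp 0 by simp]
    apply Real.continuous_exp.continuousAt.tendsto.comp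
    have h0 : Tendsto (fun n : ℕ => (1:ℝ)/(n+1)) atTop (𝓝 0) :=
      tendsto_one_div_add_atTop_nhds_zero_nat
    simpa using h0.mul_const z.re
  exact ge_of_tendsto' htend hseq

lemma herm_quasinilpotent_eq_zero (h : B)
    (hq : ∀ ε : ℝ, 0 < ε → ∃ C : ℝ, 1 ≤ C ∧ ∀ n, ‖h ^ n‖ ≤ C * ε ^ n)
    (hb : ∀ t : ℝ, ‖exp (((t : ℂ) * Complex.I) • h)‖ ≤ 1) : h = 0 := by
  have hnegpow : ∀ n : ℕ, ‖(-h) ^ n‖ = ‖h ^ n‖ := by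
    intro n
    rw [neg_pow]
    rcases Nat.even_or_odd n with he | ho
    · rw [he.neg_one_pow, one_mul]
    · rw [ho.neg_one_pow, neg_one_mul, norm_neg]
  have hq' : ∀ ε : ℝ, 0 < ε → ∃ C : ℝ, 1 ≤ C ∧ ∀ n, ‖(-h) ^ n‖ ≤ C * ε ^ n := by
    intro ε hε
    obtain ⟨C, hC, hCb⟩ := hq ε hε
    exact ⟨C, hC, fun n => by rw [hnegpow]; exact hCb n⟩
  have hb' : ∀ t : ℝ, ‖exp (((t : ℂ) * Complex.I) • (-h))‖ ≤ 1 := by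
    intro t
    have harg : (((t:ℂ) * Complex.I) • (-h)) = ((((-t:ℝ):ℂ)) * Complex.I) • h := by
      push_cast
      rw [smul_neg, ← neg_smul]
      ring_nf
    rw [harg]
    exact hb (-t)
  have hbdd : ∀ z : ℂ, ‖exp (z • h)‖ ≤ 1 := by
    intro z
    rcases le_or_gt 0 z.re with hz | hz
    · exact half_plane_bound h hq hb z hz
    · have hz' : 0 ≤ (-z).re := by simp; linarith
      have := half_plane_bound (-h) hq' hb' (-z) hz'
      rwa [neg_smul, smul_neg, neg_neg] at this
  have hF : Differentiable ℂ (fun w : ℂ => exp (w • h)) :=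
    fun w => (hasDerivAt_exp_smul_const h w).differentiableAt
  have hbound : Bornology.IsBounded (Set.range fun w : ℂ => exp (w • h)) := by
    rw [Metric.isBounded_iff_subset_closedBall 0]
    exact ⟨1, by rintro _ ⟨z, rfl⟩; simpa [mem_closedBall_iff_norm] using hbdd z⟩
  obtain ⟨c, hc⟩ := hF.exists_eq_const_of_bounded hbound
  have hd1 : HasDerivAt (fun w : ℂ => exp (w • h)) (exp ((0:ℂ) • h) * h) 0 :=
    hasDerivAt_exp_smul_const h 0
  rw [hc] at hd1
  have hd2 : HasDerivAt (Function.const ℂ c) (0 : B) 0 := hasDerivAt_const 0 c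
  have := hd1.unique hd2
  rwa [zero_smul, NormedSpace.exp_zero, one_mul] at this

end Aux

section Main
variable {A B : Type*} [CStarAlgebra A] [NormedRing B] [NormedAlgebra ℂ B]
  [CompleteSpace B] [NormOneClass B]

lemma unitary_exp_norm [Nontrivial A] (t : ℝ) {x : A} (hx : IsSelfAdjoint x) :
    ‖exp (((t:ℂ) * Complex.I) • x)‖ = 1 := by
  have hskew : ((t:ℂ) * Complex.I) ∈ skewAdjoint ℂ := by
    rw [skewAdjoint.mem_iff]
    simp [Complex.ext_iff]
  letI : NormedAlgebra ℚ A := .restrictScalars ℚ ℂ A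
  have hu := exp_mem_unitary_of_mem_skewAdjoint (hx.smul_mem_skewAdjoint hskew)
  exact CStarRing.norm_coe_unitary ⟨_, hu⟩

lemma key_selfadj (θ : A →ₐ[ℂ] B) (hcontr : ∀ a : A, ‖θ a‖ ≤ ‖a‖)
    (hinj : Function.Injective θ) {s : A} (hs : IsSelfAdjoint s) : ‖s‖ ≤ ‖θ s‖ := by
  rcases subsingleton_or_nontrivial A with hA | hA
  · simp [Subsingleton.elim s 0]
  by_contra hlt
  push_neg at hlt
  have hθcont : Continuous θ := AddMonoidHomClass.continuous_of_bound θ 1 (by simpa using hcontr)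
  set R : ℝ := ‖s‖ with hR
  set ρ : ℝ := ‖θ s‖ with hρ
  set ρ'' : ℝ := (ρ + R) / 2 with hρ''
  have hρR : ρ < R := hlt
  have hρnn : 0 ≤ ρ := norm_nonneg _
  have hRpos : 0 < R := lt_of_le_of_lt hρnn hρR
  have hρ''lt : ρ'' < R := by rw [hρ'']; linarith
  have hρρ'' : ρ < ρ'' := by rw [hρ'']; linarith
  -- spectrum facts
  have hspec_sub : spectrum ℂ (θ s) ⊆ spectrum ℂ s := AlgHom.spectrum_apply_subset θ s
  have hspec_real : ∀ lam ∈ spectrum ℂ (θ s), lam = ((lam.re : ℝ) : ℂ) ∧ |lam.re| ≤ ρ := by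
    intro lam hlam
    have h1 : lam = lam.re := hs.mem_spectrum_eq_re (hspec_sub hlam)
    have h2 : ‖lam‖ ≤ ρ := spectrum.norm_le_norm_of_mem hlam
    refine ⟨h1, ?_⟩
    calc |lam.re| ≤ ‖lam‖ := Complex.abs_re_le_norm lam
      _ ≤ ρ := h2
  -- the test function
  set f : ℝ → ℝ := fun t => max 0 (|t| - ρ'') with hfdef
  have hfc : Continuous f := continuous_const.max (continuous_abs.sub continuous_const)
  -- a spectral point of s of maximal modulus
  have hspecR_ne : (spectrum ℝ s).Nonempty := hs.spectrum_nonempty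
  have hsr : (spectralRadius ℝ s).toReal = R := hs.toReal_spectralRadius_eq_norm
  have hmax : ∃ lam ∈ spectrum ℝ s, |lam| = R := by
    rcases Real.spectralRadius_mem_spectrum_or hspecR_ne with h | h
    · exact ⟨(spectralRadius ℝ s).toReal, h, by rw [hsr, abs_of_pos hRpos]⟩
    · exact ⟨-(spectralRadius ℝ s).toReal, h, by rw [abs_neg, hsr, abs_of_pos hRpos]⟩
  obtain ⟨lam₀, hlam₀, hlam₀R⟩ := hmax
  have hspecR_bdd : ∀ lam ∈ spectrum ℝ s, |lam| ≤ R := fun lam hlam => by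
    simpa using spectrum.norm_le_norm_of_mem (𝕜 := ℝ) hlam
  -- x := f(s) ≠ 0
  set x : A := cfc f s with hx
  have hxpos : 0 < ‖x‖ := by
    have h1 : ‖f lam₀‖ ≤ ‖x‖ :=
      norm_apply_le_norm_cfc f s hlam₀ hfc.continuousOn hs
    have h2 : 0 < f lam₀ := by
      rw [hfdef]
      simp only [lt_max_iff]
      right
      rw [hlam₀R]
      linarith
    calc (0:ℝ) < f lam₀ := h2
      _ ≤ ‖f lam₀‖ := le_abs_self _
      _ ≤ ‖x‖ := h1
  have hxsa : IsSelfAdjoint x := cfc_predicate f s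
  -- quasinilpotent bound for θ x
  have hq : ∀ ε : ℝ, 0 < ε → ∃ C : ℝ, 1 ≤ C ∧ ∀ n, ‖(θ x) ^ n‖ ≤ C * ε ^ n := by
    intro ε hε
    -- polynomial approximation
    obtain ⟨p, hp⟩ := exists_polynomial_near_of_continuousOn (-R) R f
      hfc.continuousOn (min (ε/4) (ε/2)) (by positivity)
    have hp' : ∀ t : ℝ, |t| ≤ R → |p.eval t - f t| ≤ ε/4 := by
      intro t ht
      have := hp t (by rw [Set.mem_Icc]; constructor <;> [linarith [neg_abs_le t]; linarith [le_abs_self t]])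
      have h2 := min_le_left (ε/4) (ε/2)
      linarith [this.le, min_le_left (ε/4) (ε/2)]
    -- x₀ and e
    set a₀ : A := aeval s p with ha₀
    set x₀ : B := θ a₀ with hx₀
    set e : B := θ x - x₀ with he
    -- spectral radius bound on x₀
    have hx₀spec : spectralRadius ℂ x₀ ≤ (Real.toNNReal (ε/4) : ℝ≥0∞) := by
      haveI : Nontrivial B := ⟨⟨1, 0, fun hone => by
        simpa [hone] using (norm_one (α := B))⟩⟩
      have haeval : x₀ = Polynomial.aeval (θ s) (p.map (algebraMap ℝ ℂ)) := by
        rw [hx₀, ha₀, Polynomial.aeval_map_algebraMap ℂ (θ s) p]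
        exact (Polynomial.aeval_algHom_apply (θ.restrictScalars ℝ) s p).symm
      rw [spectralRadius, haeval]
      refine iSup₂_le fun lam hlam => ?_
      rw [spectrum.map_polynomial_aeval] at hlam
      obtain ⟨mu, hmu, rfl⟩ := hlam
      obtain ⟨hmure, hmuab⟩ := hspec_real mu hmu
      have heval : Polynomial.eval mu (p.map (algebraMap ℝ ℂ)) = ((p.eval mu.re : ℝ) : ℂ) := by
        conv_lhs => rw [hmure]
        rw [Polynomial.eval_map, ← Polynomial.aeval_def,
          show ((mu.re : ℝ) : ℂ) = algebraMap ℝ ℂ mu.re from rfl,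
          Polynomial.aeval_algebraMap_apply]
        norm_num [Polynomial.coe_aeval_eq_eval]
      simp only [heval]
      have hfmu : f mu.re = 0 := by
        rw [hfdef]
        simp only [max_eq_left_iff]
        have : |mu.re| ≤ ρ'' := le_trans hmuab (le_of_lt hρρ'')
        linarith
      have habs : |p.eval mu.re| ≤ ε/4 := by
        have := hp' mu.re (le_trans hmuab hρR.le)
        rw [hfmu] at this
        simpa using this
      have : ‖((p.eval mu.re : ℝ) : ℂ)‖₊ ≤ Real.toNNReal (ε/4) := by
        rw [← NNReal.coe_le_coe]
        simp only [coe_nnnorm, Complex.norm_real, Real.norm_eq_abs]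
        rw [Real.coe_toNNReal _ (by positivity)]
        exact habs
      exact_mod_cast ENNReal.coe_le_coe.2 this
    have hx₀rad : spectralRadius ℂ x₀ < (Real.toNNReal (ε/2) : ℝ≥0∞) := by
      refine lt_of_le_of_lt hx₀spec ?_
      rw [ENNReal.coe_lt_coe]
      rw [← NNReal.coe_lt_coe]
      rw [Real.coe_toNNReal _ (by positivity), Real.coe_toNNReal _ (by positivity)]
      linarith
    obtain ⟨C, hC1, hCb⟩ := pow_norm_bound x₀ hx₀rad
    have hCb' : ∀ n, ‖x₀ ^ n‖ ≤ C * (ε/2) ^ n := by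
      intro n
      have := hCb n
      rwa [Real.coe_toNNReal _ (by positivity)] at this
    -- e bound
    have hebound : ‖e‖ ≤ ε/2 := by
      have h1 : x - a₀ = cfc (fun t => f t - p.eval t) s := by
        rw [hx, ha₀, ← cfc_polynomial p s hs]
        rw [cfc_sub f (fun t : ℝ => Polynomial.eval t p) s hfc.continuousOn
          p.continuous.continuousOn]
      have h2 : ‖x - a₀‖ ≤ ε/2 := by
        rw [h1]
        refine norm_cfc_le (by positivity) fun lam hlam => ?_
        have := hp' lam (hspecR_bdd lam hlam)
        rw [Real.norm_eq_abs, abs_sub_comm]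
        linarith
      calc ‖e‖ = ‖θ (x - a₀)‖ := by rw [he, hx₀, map_sub]
        _ ≤ ‖x - a₀‖ := hcontr _
        _ ≤ ε/2 := h2
    have heb : ∀ k, ‖e ^ k‖ ≤ (ε/2) ^ k := by
      intro k
      rcases Nat.eq_zero_or_pos k with rfl | hk
      · simp
      · exact le_trans (norm_pow_le' e hk) (pow_le_pow_left₀ (norm_nonneg _) hebound k)
    -- commute
    have hcomm : Commute x₀ e := by
      have h1 : Commute a₀ x := by
        rw [hx, ha₀, ← cfc_polynomial p s hs]
        have hpc : ContinuousOn (fun t : ℝ => Polynomial.eval t p) (spectrum ℝ s) :=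
          p.continuous.continuousOn
        unfold Commute SemiconjBy
        rw [← cfc_mul (fun t : ℝ => Polynomial.eval t p) f s hpc hfc.continuousOn,
          ← cfc_mul f (fun t : ℝ => Polynomial.eval t p) s hfc.continuousOn hpc]
        exact cfc_congr fun t _ => mul_comm _ _
      have h2 : Commute x₀ (θ x) := by
        unfold Commute SemiconjBy
        rw [hx₀, ← map_mul, ← map_mul, h1.eq]
      exact h2.sub_right (Commute.refl x₀)
    refine ⟨C, hC1, fun n => ?_⟩
    have hθx : θ x = x₀ + e := by rw [he]; abel
    rw [hθx]
    have := add_pow_norm_bound hcomm hC1 hCb' heb (by positivity) n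
    calc ‖(x₀ + e) ^ n‖ ≤ C * (2 * (ε/2)) ^ n := this
      _ = C * ε ^ n := by rw [show 2 * (ε/2) = ε by ring]
  -- hermitian bound for θ x
  have hb : ∀ t : ℝ, ‖exp (((t : ℂ) * Complex.I) • (θ x))‖ ≤ 1 := by
    intro t
    have h1 : θ (exp (((t:ℂ) * Complex.I) • x)) = exp (((t:ℂ) * Complex.I) • (θ x)) := by
      letI : NormedAlgebra ℚ A := .restrictScalars ℚ ℂ A
      letI : NormedAlgebra ℚ B := .restrictScalars ℚ ℂ B
      rw [map_exp θ hθcont, map_smul]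
    rw [← h1]
    calc ‖θ (exp (((t:ℂ) * Complex.I) • x))‖ ≤ ‖exp (((t:ℂ) * Complex.I) • x)‖ := hcontr _
      _ = 1 := unitary_exp_norm t hxsa
  -- conclude
  have hzero : θ x = 0 := herm_quasinilpotent_eq_zero (θ x) hq hb
  have : x = 0 := hinj (by rw [hzero, map_zero])
  rw [this] at hxpos
  simp at hxpos

end Main

/-- A contractive unital injective homomorphism `θ` from a unital C*-algebra into a unital
Banach algebra is an isometry onto its range, and the range is a C*-algebra with the norm and
multiplication inherited from `B`: it is closed under the involution `θ a ↦ θ (star a)` and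
the C*-identity holds on it. -/
theorem contractive_injective_hom_isometry {A B : Type*} [CStarAlgebra A]
    [NormedRing B] [NormedAlgebra ℂ B] [CompleteSpace B] [NormOneClass B]
    (θ : A →ₐ[ℂ] B) (hcontr : ∀ a : A, ‖θ a‖ ≤ ‖a‖) (hinj : Function.Injective θ) :
    (∀ a : A, ‖θ a‖ = ‖a‖) ∧ (∀ a : A, ‖θ (star a) * θ a‖ = ‖θ a‖ ^ 2) := by
  have hnorm : ∀ a : A, ‖θ a‖ = ‖a‖ := by
    intro a
    refine le_antisymm (hcontr a) ?_
    rcases eq_or_ne a 0 with rfl | ha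
    · simp
    have h1 : 0 < ‖a‖ := norm_pos_iff.2 ha
    have hsa : IsSelfAdjoint (star a * a) := IsSelfAdjoint.star_mul_self a
    have h2 : ‖star a * a‖ ≤ ‖θ (star a * a)‖ := key_selfadj θ hcontr hinj hsa
    have h3 : ‖θ (star a * a)‖ ≤ ‖θ (star a)‖ * ‖θ a‖ := by
      rw [map_mul]; exact norm_mul_le _ _
    have h4 : ‖θ (star a)‖ ≤ ‖a‖ := le_trans (hcontr (star a)) (by rw [norm_star])
    have h5 : ‖star a * a‖ = ‖a‖ * ‖a‖ := CStarRing.norm_star_mul_self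
    nlinarith [norm_nonneg (θ a), norm_nonneg (θ (star a))]
  refine ⟨hnorm, fun a => ?_⟩
  calc ‖θ (star a) * θ a‖ = ‖θ (star a * a)‖ := by rw [map_mul]
    _ = ‖star a * a‖ := hnorm _
    _ = ‖a‖ * ‖a‖ := CStarRing.norm_star_mul_self
    _ = ‖θ a‖ ^ 2 := by rw [hnorm a]; ring
end
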